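/- Let S be an abelian semigroup, B a Banach space, n a positive integer, φ : S^{n+1} → [0, ∞) satisfying Σ_{k=0}^∞ 2^{-n(k+1)} φ(2^k z) < ∞ for every z ∈ S^{n+1}, and let g : S^n → B be a symmetric function satisfying ‖D_n g(z)‖ ≤ φ(z) for all z ∈ S^{n+1}. Let Φ : S^n → [0, ∞) be any function such that Φ(y) ≥ R_n^+ φ(y) and lim_{k→∞} 2^{-nk} Φ(2^k y) = 0 for all y ∈ S^n. Then the limit a(y) := lim_{k→∞} 2^{-nk} g(2^k y) exists for every y ∈ S^n, a : S^n → B is a symmetric n-additive function satisfying ‖g(y) − a(y)‖ ≤ Φ(y) for all y ∈ S^n, and a is the unique symmetric n-additive function with this property. -/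
import Mathlib


/-- The Cauchy difference operator `D_n` for a function of `n = m + 1` variables. -/
def Dop {S B : Type*} [AddCommSemigroup S] [AddCommGroup B] (m : ℕ)
    (g : (Fin (m + 1) → S) → B) (z : Fin (m + 2) → S) : B :=
  g (Function.update (fun i : Fin (m + 1) => z i.castSucc) (Fin.last m)
      (z (Fin.castSucc (Fin.last m)) + z (Fin.last (m + 1))))
    - g (fun i : Fin (m + 1) => z i.castSucc)
    - g (Function.update (fun i : Fin (m + 1) => z i.castSucc) (Fin.last m)
      (z (Fin.last (m + 1))))

/-- The operator `r_n` for `n = m + 1`: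
`r_n φ (x₁, …, x_n) = ∑_{j=1}^{n} 2^{j-1} φ(2x₁, …, 2x_{n-j}, x_n, x_{n-1}, …,
x_{n-j+1}, x_{n-j+1})` (indexed by `j = jj + 1`, tuples are `0`-indexed). -/
def rop {S : Type*} [AddCommSemigroup S] (m : ℕ)
    (φ : (Fin (m + 2) → S) → ℝ) (y : Fin (m + 1) → S) : ℝ :=
  ∑ jj ∈ Finset.range (m + 1), 2 ^ jj *
    φ (fun i : Fin (m + 2) =>
      if h1 : (i : ℕ) < m - jj then y ⟨i, by omega⟩ + y ⟨i, by omega⟩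
      else if h2 : m ≤ (i : ℕ) then y ⟨m - jj, by omega⟩
      else y ⟨2 * m - jj - i, by omega⟩)

private lemma SViter_add {S : Type*} [AddCommSemigroup S] (k : ℕ) (a b : S) :
    (fun s : S => s + s)^[k] (a + b)
      = (fun s : S => s + s)^[k] a + (fun s : S => s + s)^[k] b := by
  induction k generalizing a b with
  | zero => rfl
  | succ k ih =>
    simp only [Function.iterate_succ_apply]
    show (fun s : S => s + s)^[k] ((a + b) + (a + b)) = _
    rw [add_add_add_comm a b a b, ih]

/-- The tuple appearing in `rop`. -/
def SVz {S : Type*} [AddCommSemigroup S] (m jj : ℕ) (y : Fin (m + 1) → S) :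
    Fin (m + 2) → S := fun i : Fin (m + 2) =>
  if h1 : (i : ℕ) < m - jj then y ⟨i, by omega⟩ + y ⟨i, by omega⟩
  else if h2 : m ≤ (i : ℕ) then y ⟨m - jj, by omega⟩
  else y ⟨2 * m - jj - i, by omega⟩

private lemma SVrop_eq {S : Type*} [AddCommSemigroup S] (m : ℕ)
    (φ : (Fin (m + 2) → S) → ℝ) (y : Fin (m + 1) → S) :
    rop m φ y = ∑ jj ∈ Finset.range (m + 1), 2 ^ jj * φ (SVz m jj y) := rfl

private lemma SVz_iter {S : Type*} [AddCommSemigroup S] (m jj k : ℕ)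
    (y : Fin (m + 1) → S) :
    (fun i : Fin (m + 2) => (fun s : S => s + s)^[k] (SVz m jj y i))
      = SVz m jj (fun i => (fun s : S => s + s)^[k] (y i)) := by
  funext i
  simp only [SVz]
  by_cases h1 : (i : ℕ) < m - jj
  · rw [dif_pos h1, dif_pos h1, SViter_add]
  · rw [dif_neg h1, dif_neg h1]
    by_cases h2 : m ≤ (i : ℕ)
    · rw [dif_pos h2, dif_pos h2]
    · rw [dif_neg h2, dif_neg h2]

private lemma SVupd_iter {S : Type*} [AddCommSemigroup S] (n k : ℕ)
    (x : Fin n → S) (j : Fin n) (w : S) :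
    (fun i : Fin n => (fun s : S => s + s)^[k] (Function.update x j w i))
      = Function.update (fun i : Fin n => (fun s : S => s + s)^[k] (x i)) j
          ((fun s : S => s + s)^[k] w) := by
  funext i
  simp only [Function.update_apply]
  by_cases h : i = j
  · rw [if_pos h, if_pos h]
  · rw [if_neg h, if_neg h]

private lemma rperm_invol (m jj : ℕ) (hjj : jj ≤ m) :
    Function.Involutive (fun i : Fin (m+1) =>
      if h : m - jj ≤ (i:ℕ) then (⟨2*m - jj - i, by omega⟩ : Fin (m+1)) else i) := by
  intro i
  have hi := i.isLt
  dsimp only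
  by_cases h1 : m - jj ≤ (i:ℕ)
  · rw [dif_pos h1, dif_pos (show m - jj ≤ ((⟨2*m - jj - ↑i, by omega⟩ : Fin (m+1)):ℕ) by
      show m - jj ≤ 2*m - jj - ↑i; omega)]
    apply Fin.ext
    show 2*m - jj - (2*m - jj - ↑i) = ↑i
    omega
  · rw [dif_neg h1, dif_neg h1]

def rperm (m jj : ℕ) (hjj : jj ≤ m) : Equiv.Perm (Fin (m+1)) :=
  (rperm_invol m jj hjj).toPerm _

lemma rperm_val (m jj : ℕ) (hjj : jj ≤ m) (i : Fin (m+1)) :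
    ((rperm m jj hjj) i : ℕ) = if m - jj ≤ (i:ℕ) then 2*m - jj - i else i := by
  simp only [rperm, Function.Involutive.coe_toPerm]
  split_ifs with h <;> rfl

private lemma SVstep {S B : Type*} [AddCommSemigroup S] [AddCommGroup B]
    (m : ℕ) (g : (Fin (m+1) → S) → B)
    (hgsym : ∀ (x : Fin (m + 1) → S) (σ : Equiv.Perm (Fin (m + 1))), g (x ∘ σ) = g x)
    (jj : ℕ) (hjj : jj ≤ m) (y : Fin (m+1) → S) :
    Dop m g (SVz m jj y)
    = g (fun i : Fin (m+1) => if (i:ℕ) < m + 1 - jj then y i + y i else y i)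
      - g (fun i : Fin (m+1) => if (i:ℕ) < m - jj then y i + y i else y i)
      - g (fun i : Fin (m+1) => if (i:ℕ) < m - jj then y i + y i else y i) := by
  have ycongr : ∀ {a : ℕ} (ha : a < m+1) {j : Fin (m+1)}, a = (j:ℕ) → y ⟨a, ha⟩ = y j := by
    intro a ha j hval
    congr 1
    exact Fin.ext hval
  set ρ := rperm m jj hjj with hρdef
  set z : Fin (m+2) → S := SVz m jj y with hzdef
  have hz : z = fun i : Fin (m + 2) =>
      if h1 : (i : ℕ) < m - jj then y ⟨i, by omega⟩ + y ⟨i, by omega⟩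
      else if h2 : m ≤ (i : ℕ) then y ⟨m - jj, by omega⟩
      else y ⟨2 * m - jj - i, by omega⟩ := rfl
  have hρlow : ∀ i : Fin (m+1), (i:ℕ) < m - jj → ρ i = i := by
    intro i h
    apply Fin.ext
    rw [rperm_val m jj hjj i, if_neg (by omega)]
  have hρhigh : ∀ i : Fin (m+1), m - jj ≤ (i:ℕ) → ((ρ i) : ℕ) = 2*m - jj - i := by
    intro i h
    rw [rperm_val m jj hjj i, if_pos h]
  have hzc : ∀ i : Fin (m+1), z i.castSucc
      = if h : (i:ℕ) < m - jj then y i + y i else y ⟨2*m - jj - i, by omega⟩ := by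
    intro i
    have hi := i.isLt
    simp only [hz, Fin.coe_castSucc]
    by_cases h1 : (i:ℕ) < m - jj
    · rw [dif_pos h1, dif_pos h1]
    · rw [dif_neg h1, dif_neg h1]
      by_cases h2 : m ≤ (i:ℕ)
      · rw [dif_pos h2]
        have hval : m - jj = 2*m - jj - (i:ℕ) := by omega
        exact ycongr _ hval
      · rw [dif_neg h2]
  have hlastval : z (Fin.castSucc (Fin.last m)) = y ⟨m - jj, by omega⟩ := by
    simp only [hz, Fin.coe_castSucc, Fin.val_last]
    rw [dif_neg (by omega), dif_pos (le_refl m)]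
  have hlastval2 : z (Fin.last (m+1)) = y ⟨m - jj, by omega⟩ := by
    simp only [hz, Fin.val_last]
    rw [dif_neg (by omega), dif_pos (by omega)]
  have hU : (fun i : Fin (m+1) => z i.castSucc)
      = (fun i : Fin (m+1) => if (i:ℕ) < m - jj then y i + y i else y i) ∘ ρ := by
    funext i
    have hi := i.isLt
    rw [hzc i]
    simp only [Function.comp_apply]
    by_cases hc : (i:ℕ) < m - jj
    · rw [dif_pos hc, hρlow i hc, if_pos hc]
    · have hv := hρhigh i (by omega)
      rw [dif_neg hc, if_neg (by omega)]
      exact ycongr _ (by omega)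
  have hU3 : Function.update (fun i : Fin (m+1) => z i.castSucc) (Fin.last m) (z (Fin.last (m+1)))
      = fun i : Fin (m+1) => z i.castSucc := by
    rw [hlastval2, ← hlastval]
    exact Function.update_eq_self _ _
  have hV : Function.update (fun i : Fin (m+1) => z i.castSucc) (Fin.last m)
        (z (Fin.castSucc (Fin.last m)) + z (Fin.last (m+1)))
      = (fun i : Fin (m+1) => if (i:ℕ) < m + 1 - jj then y i + y i else y i) ∘ ρ := by
    funext i
    have hi := i.isLt
    rw [Function.update_apply, hlastval, hlastval2]
    simp only [Function.comp_apply]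
    by_cases hil : i = Fin.last m
    · rw [if_pos hil]
      subst hil
      have hv := hρhigh (Fin.last m) (by rw [Fin.val_last]; omega)
      simp only [Fin.val_last] at hv
      rw [if_pos (show ((ρ (Fin.last m)):ℕ) < m + 1 - jj by omega)]
      have e : (⟨m - jj, by omega⟩ : Fin (m+1)) = ρ (Fin.last m) :=
        Fin.ext (show m - jj = ((ρ (Fin.last m)):ℕ) by omega)
      rw [e]
    · rw [if_neg hil, hzc i]
      have him : (i:ℕ) < m := by
        rcases Nat.lt_succ_iff_lt_or_eq.mp hi with h | h
        · exact h
        · exact absurd (Fin.ext (by rw [h, Fin.val_last])) hil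
      by_cases hc : (i:ℕ) < m - jj
      · rw [dif_pos hc, hρlow i hc, if_pos (by omega)]
      · have hv := hρhigh i (by omega)
        rw [dif_neg hc, if_neg (show ¬ ((ρ i):ℕ) < m + 1 - jj by omega)]
        exact ycongr _ (by omega)
  rw [Dop, hV, hU3, hU, hgsym _ ρ, hgsym _ ρ]

private lemma SVkey {S B : Type*} [AddCommSemigroup S] [NormedAddCommGroup B]
    (m : ℕ) (φ : (Fin (m+2) → S) → ℝ) (hφ0 : ∀ z, 0 ≤ φ z)
    (g : (Fin (m+1) → S) → B)
    (hgsym : ∀ (x : Fin (m + 1) → S) (σ : Equiv.Perm (Fin (m + 1))), g (x ∘ σ) = g x)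
    (hgD : ∀ z, ‖Dop m g z‖ ≤ φ z) (y : Fin (m+1) → S) :
    ‖g (fun i => y i + y i) - (2^(m+1) : ℤ) • g y‖ ≤ rop m φ y := by
  have main : ∀ jj : ℕ, jj ≤ m + 1 →
      ‖g (fun i : Fin (m+1) => y i + y i)
        - (2^jj : ℤ) • g (fun i : Fin (m+1) => if (i:ℕ) < m + 1 - jj then y i + y i else y i)‖
        ≤ ∑ t ∈ Finset.range jj, 2 ^ t * φ (SVz m t y) := by
    intro jj
    induction jj with
    | zero =>
      intro _
      have hW : (fun i : Fin (m+1) => if (i:ℕ) < m + 1 - 0 then y i + y i else y i)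
          = fun i : Fin (m+1) => y i + y i := by
        funext i
        exact if_pos (by have := i.isLt; omega)
      rw [hW]
      simp
    | succ jj ih =>
      intro hjj1
      have hjj : jj ≤ m := by omega
      have hW1 : (fun i : Fin (m+1) => if (i:ℕ) < m + 1 - (jj+1) then y i + y i else y i)
          = (fun i : Fin (m+1) => if (i:ℕ) < m - jj then y i + y i else y i) := by
        funext i
        have : m + 1 - (jj+1) = m - jj := by omega
        rw [this]
      rw [hW1]
      have hstep := hgD (SVz m jj y)
      rw [SVstep m g hgsym jj hjj y] at hstep
      set A := g (fun i : Fin (m+1) => y i + y i) with hA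
      set C := g (fun i : Fin (m+1) => if (i:ℕ) < m + 1 - jj then y i + y i else y i) with hC
      set D := g (fun i : Fin (m+1) => if (i:ℕ) < m - jj then y i + y i else y i) with hD
      have hid : A - (2^(jj+1) : ℤ) • D = (A - (2^jj : ℤ) • C) + (2^jj : ℤ) • (C - D - D) := by
        have h2 : (2^(jj+1) : ℤ) = 2^jj + 2^jj := by ring
        rw [h2, add_smul, smul_sub, smul_sub]
        abel
      rw [hid]
      calc ‖(A - (2^jj : ℤ) • C) + (2^jj : ℤ) • (C - D - D)‖
          ≤ ‖A - (2^jj : ℤ) • C‖ + ‖(2^jj : ℤ) • (C - D - D)‖ := norm_add_le _ _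
        _ ≤ (∑ t ∈ Finset.range jj, 2 ^ t * φ (SVz m t y))
            + 2 ^ jj * φ (SVz m jj y) := by
            apply add_le_add (ih (by omega))
            calc ‖(2^jj : ℤ) • (C - D - D)‖ ≤ ‖(2^jj : ℤ)‖ * ‖C - D - D‖ :=
                  norm_zsmul_le _ _
              _ ≤ 2 ^ jj * φ _ := by
                  rw [Int.norm_eq_abs]
                  push_cast
                  rw [abs_of_nonneg (by positivity : (0:ℝ) ≤ 2^jj)]
                  exact mul_le_mul_of_nonneg_left hstep (by positivity)
        _ = ∑ t ∈ Finset.range (jj+1), 2 ^ t * φ (SVz m t y) :=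
            (Finset.sum_range_succ _ _).symm
  have hWend : (fun i : Fin (m+1) => if (i:ℕ) < m + 1 - (m+1) then y i + y i else y i)
      = y := by
    funext i
    exact if_neg (by omega)
  have h := main (m+1) le_rfl
  rw [hWend] at h
  rw [SVrop_eq]
  exact h

/-- The normalized sequence whose limit is `a`. -/
noncomputable def SVgk {S B : Type*} [AddCommSemigroup S] [NormedAddCommGroup B]
    [NormedSpace ℝ B] (m : ℕ) (g : (Fin (m + 1) → S) → B) (k : ℕ)
    (y : Fin (m + 1) → S) : B :=
  ((2 : ℝ) ^ ((m + 1) * k))⁻¹ • g (fun i => (fun s : S => s + s)^[k] (y i))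

private lemma SVdist {S B : Type*} [AddCommSemigroup S] [NormedAddCommGroup B]
    [NormedSpace ℝ B] (m : ℕ) (φ : (Fin (m + 2) → S) → ℝ) (hφ0 : ∀ z, 0 ≤ φ z)
    (g : (Fin (m + 1) → S) → B)
    (hgsym : ∀ (x : Fin (m + 1) → S) (σ : Equiv.Perm (Fin (m + 1))), g (x ∘ σ) = g x)
    (hgD : ∀ z, ‖Dop m g z‖ ≤ φ z) (y : Fin (m + 1) → S) (k : ℕ) :
    dist (SVgk m g k y) (SVgk m g (k + 1) y)
      ≤ rop m φ (fun i => (fun s : S => s + s)^[k] (y i)) / 2 ^ ((m + 1) * (k + 1)) := by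
  have hkey := SVkey m φ hφ0 g hgsym hgD (fun i : Fin (m+1) => (fun s : S => s + s)^[k] (y i))
  have hiter1 : (fun i : Fin (m+1) => (fun s : S => s + s)^[k+1] (y i))
      = fun i : Fin (m+1) =>
          (fun s : S => s + s)^[k] (y i) + (fun s : S => s + s)^[k] (y i) := by
    funext i
    rw [Function.iterate_succ_apply']
  have hpow : ((2:ℝ) ^ ((m + 1) * (k + 1))) = 2 ^ ((m + 1) * k) * 2 ^ (m + 1) := by
    rw [← pow_add]
    congr 1
    try ring
  have hpos : (0:ℝ) < 2 ^ ((m+1)*k) := by positivity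
  have hpos1 : (0:ℝ) < 2 ^ ((m+1)*(k+1)) := by positivity
  rw [dist_eq_norm]
  have hid : SVgk m g k y - SVgk m g (k+1) y
      = ((2:ℝ) ^ ((m + 1) * (k + 1)))⁻¹ •
        ((2 ^ (m+1) : ℤ) • g (fun i => (fun s : S => s + s)^[k] (y i))
          - g (fun i => (fun s : S => s + s)^[k+1] (y i))) := by
    have hcast : ((2 ^ (m+1) : ℤ) • g (fun i => (fun s : S => s + s)^[k] (y i)))
        = ((2:ℝ)^(m+1)) • g (fun i => (fun s : S => s + s)^[k] (y i)) := by
      rw [← Int.cast_smul_eq_zsmul ℝ]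
      congr 1
      push_cast
      try ring
    have hsc : ((2:ℝ)^((m+1)*(k+1)))⁻¹ * 2^(m+1) = ((2:ℝ)^((m+1)*k))⁻¹ := by
      rw [hpow]
      field_simp
    have e1 : SVgk m g k y
        = ((2:ℝ)^((m+1)*k))⁻¹ • g (fun i => (fun s : S => s + s)^[k] (y i)) := rfl
    have e2 : SVgk m g (k+1) y
        = ((2:ℝ)^((m+1)*(k+1)))⁻¹ • g (fun i => (fun s : S => s + s)^[k+1] (y i)) := rfl
    rw [e1, e2, smul_sub, hcast, smul_smul, hsc]
  rw [hid, norm_smul, norm_inv, norm_pow, Real.norm_two, ← norm_neg, neg_sub, hiter1,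
    div_eq_inv_mul]
  exact mul_le_mul_of_nonneg_left hkey (by positivity)

private lemma SVsummable {S : Type*} [AddCommSemigroup S] (m : ℕ)
    (φ : (Fin (m + 2) → S) → ℝ)
    (hφsum : ∀ z : Fin (m + 2) → S,
      Summable fun k : ℕ =>
        φ (fun i => (fun s : S => s + s)^[k] (z i)) / 2 ^ ((m + 1) * (k + 1)))
    (y : Fin (m + 1) → S) :
    Summable fun k : ℕ =>
      rop m φ (fun i => (fun s : S => s + s)^[k] (y i)) / 2 ^ ((m + 1) * (k + 1)) := by
  have hform : ∀ k : ℕ,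
      rop m φ (fun i => (fun s : S => s + s)^[k] (y i)) / 2 ^ ((m + 1) * (k + 1))
        = ∑ jj ∈ Finset.range (m + 1),
            2 ^ jj * (φ (fun i => (fun s : S => s + s)^[k] (SVz m jj y i))
              / 2 ^ ((m + 1) * (k + 1))) := by
    intro k
    rw [SVrop_eq, Finset.sum_div]
    refine Finset.sum_congr rfl fun jj _ => ?_
    rw [SVz_iter, mul_div_assoc]
  have : Summable fun k : ℕ => ∑ jj ∈ Finset.range (m + 1),
      2 ^ jj * (φ (fun i => (fun s : S => s + s)^[k] (SVz m jj y i))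
        / 2 ^ ((m + 1) * (k + 1))) := by
    apply summable_sum
    intro jj _
    exact (hφsum (SVz m jj y)).mul_left _
  exact this.congr fun k => (hform k).symm

/-- **Theorem 2.2 (1).** Let `S` be an abelian semigroup, `B` a Banach space, `n = m + 1 ≥ 1`,
`φ : Sⁿ⁺¹ → [0,∞)` with `∑ₖ 2^{-n(k+1)} φ(2ᵏ z) < ∞`, and `g : Sⁿ → B` symmetric with
`‖D_n g z‖ ≤ φ z`.  If `Φ : Sⁿ → [0,∞)` satisfies `Φ y ≥ R_n⁺ φ y` and
`2^{-nk} Φ(2ᵏ y) → 0`, then `a y := lim 2^{-nk} g(2ᵏ y)` exists, is symmetric and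
`n`-additive, satisfies `‖g y - a y‖ ≤ Φ y`, and is the unique such symmetric `n`-additive
map.  (Here `2ᵏ x` is the `k`-fold iterate of `x ↦ x + x`.) -/
theorem stmt4 {S B : Type*} [AddCommSemigroup S] [NormedAddCommGroup B]
    [NormedSpace ℝ B] [CompleteSpace B]
    (m : ℕ) (φ : (Fin (m + 2) → S) → ℝ) (hφ0 : ∀ z, 0 ≤ φ z)
    (hφsum : ∀ z : Fin (m + 2) → S,
      Summable fun k : ℕ =>
        φ (fun i => (fun s : S => s + s)^[k] (z i)) / 2 ^ ((m + 1) * (k + 1)))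
    (g : (Fin (m + 1) → S) → B)
    (hgsym : ∀ (x : Fin (m + 1) → S) (σ : Equiv.Perm (Fin (m + 1))), g (x ∘ σ) = g x)
    (hgD : ∀ z, ‖Dop m g z‖ ≤ φ z)
    (Φ : (Fin (m + 1) → S) → ℝ) (hΦ0 : ∀ y, 0 ≤ Φ y)
    (hΦR : ∀ y : Fin (m + 1) → S,
      (∑' k : ℕ, rop m φ (fun i => (fun s : S => s + s)^[k] (y i)) / 2 ^ ((m + 1) * (k + 1)))
        ≤ Φ y)
    (hΦlim : ∀ y : Fin (m + 1) → S,
      Filter.Tendsto (fun k : ℕ => Φ (fun i => (fun s : S => s + s)^[k] (y i)) / 2 ^ ((m + 1) * k))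
        Filter.atTop (nhds 0)) :
    ∃ a : (Fin (m + 1) → S) → B,
      (∀ y : Fin (m + 1) → S,
        Filter.Tendsto
          (fun k : ℕ => ((2 : ℝ) ^ ((m + 1) * k))⁻¹ • g (fun i => (fun s : S => s + s)^[k] (y i)))
          Filter.atTop (nhds (a y))) ∧
      (∀ (x : Fin (m + 1) → S) (σ : Equiv.Perm (Fin (m + 1))), a (x ∘ σ) = a x) ∧
      (∀ (x : Fin (m + 1) → S) (i : Fin (m + 1)) (u v : S),
        a (Function.update x i (u + v)) = a (Function.update x i u) + a (Function.update x i v)) ∧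
      (∀ y, ‖g y - a y‖ ≤ Φ y) ∧
      (∀ a' : (Fin (m + 1) → S) → B,
        (∀ (x : Fin (m + 1) → S) (σ : Equiv.Perm (Fin (m + 1))), a' (x ∘ σ) = a' x) →
        (∀ (x : Fin (m + 1) → S) (i : Fin (m + 1)) (u v : S),
          a' (Function.update x i (u + v))
            = a' (Function.update x i u) + a' (Function.update x i v)) →
        (∀ y, ‖g y - a' y‖ ≤ Φ y) → a' = a) := by
  classical
  have hdist := SVdist m φ hφ0 g hgsym hgD
  have hsum := SVsummable m φ hφsum
  have exA : ∀ y : Fin (m+1) → S, ∃ b : B,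
      Filter.Tendsto (fun k : ℕ => SVgk m g k y) Filter.atTop (nhds b) := fun y =>
    cauchySeq_tendsto_of_complete
      (cauchySeq_of_dist_le_of_summable _ (hdist y) (hsum y))
  choose a ha using exA
  have hgk0 : ∀ y, SVgk m g 0 y = g y := by
    intro y
    simp [SVgk]
  have hbound : ∀ y, ‖g y - a y‖ ≤ Φ y := by
    intro y
    have h := dist_le_tsum_of_dist_le_of_tendsto₀ _ (hdist y) (hsum y) (ha y)
    rw [hgk0 y, dist_eq_norm] at h
    exact h.trans (hΦR y)
  have hasym : ∀ (x : Fin (m + 1) → S) (σ : Equiv.Perm (Fin (m + 1))), a (x ∘ σ) = a x := by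
    intro x σ
    have hk : (fun k => SVgk m g k (x ∘ σ)) = fun k => SVgk m g k x := by
      funext k
      exact congrArg (fun t => ((2:ℝ)^((m+1)*k))⁻¹ • t)
        (hgsym (fun i => (fun s : S => s + s)^[k] (x i)) σ)
    have h1 := ha (x ∘ σ)
    rw [hk] at h1
    exact tendsto_nhds_unique h1 (ha x)
  have hpow : ∀ k : ℕ, ((2:ℝ) ^ ((m + 1) * (k + 1))) = 2 ^ ((m + 1) * k) * 2 ^ (m + 1) := by
    intro k
    rw [← pow_add]
    congr 1
    try ring
  have hDzero : ∀ z : Fin (m+2) → S,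
      Filter.Tendsto (fun k : ℕ => ((2:ℝ)^((m+1)*k))⁻¹ •
        Dop m g (fun i => (fun s : S => s + s)^[k] (z i))) Filter.atTop (nhds 0) := by
    intro z
    apply squeeze_zero_norm
      (a := fun k => φ (fun i => (fun s : S => s + s)^[k] (z i)) / 2^((m+1)*k))
    · intro k
      rw [norm_smul, norm_inv, norm_pow, Real.norm_two, div_eq_inv_mul]
      exact mul_le_mul_of_nonneg_left (hgD _) (by positivity)
    · have h0 := (hφsum z).tendsto_atTop_zero
      have h2 := h0.const_mul ((2:ℝ)^(m+1))
      rw [mul_zero] at h2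
      apply h2.congr
      intro k
      rw [hpow k]
      have hne1 : ((2:ℝ)^((m+1)*k)) ≠ 0 := by positivity
      have hne2 : ((2:ℝ)^(m+1)) ≠ 0 := by positivity
      field_simp
  have haddlast : ∀ (x : Fin (m + 1) → S) (u v : S),
      a (Function.update x (Fin.last m) (u + v))
        = a (Function.update x (Fin.last m) u) + a (Function.update x (Fin.last m) v) := by
    intro x u v
    set Bc := Function.update x (Fin.last m) u with hB
    set A := Function.update x (Fin.last m) (u + v) with hA
    set Cc := Function.update x (Fin.last m) v with hC
    set z : Fin (m+2) → S := Fin.snoc Bc v with hzdef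
    have hz2 : ∀ i : Fin (m+1), z i.castSucc = Bc i := by
      intro i
      simp [hzdef]
    have hzl : z (Fin.last (m+1)) = v := by simp [hzdef]
    have hzc : z (Fin.castSucc (Fin.last m)) = u := by
      rw [hz2, hB, Function.update_self]
    have hAB : A = Function.update Bc (Fin.last m) (u + v) := by
      rw [hB, Function.update_idem]
    have hCB : Cc = Function.update Bc (Fin.last m) v := by
      rw [hB, Function.update_idem]
    have keyeq : ∀ k : ℕ, ((2:ℝ)^((m+1)*k))⁻¹ •
          Dop m g (fun i => (fun s : S => s + s)^[k] (z i))
        = SVgk m g k A - SVgk m g k Bc - SVgk m g k Cc := by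
      intro k
      have harg2 : (fun i : Fin (m+1) => (fun s : S => s + s)^[k] (z i.castSucc))
          = fun i => (fun s : S => s + s)^[k] (Bc i) := by
        funext i
        rw [hz2 i]
      have harg1 : Function.update
            (fun i : Fin (m+1) => (fun s : S => s + s)^[k] (z i.castSucc)) (Fin.last m)
            ((fun s : S => s + s)^[k] (z (Fin.castSucc (Fin.last m)))
              + (fun s : S => s + s)^[k] (z (Fin.last (m+1))))
          = fun i => (fun s : S => s + s)^[k] (A i) := by
        rw [harg2, hzc, hzl, ← SViter_add, hAB]
        exact (SVupd_iter (m+1) k Bc (Fin.last m) (u+v)).symm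
      have harg3 : Function.update
            (fun i : Fin (m+1) => (fun s : S => s + s)^[k] (z i.castSucc)) (Fin.last m)
            ((fun s : S => s + s)^[k] (z (Fin.last (m+1))))
          = fun i => (fun s : S => s + s)^[k] (Cc i) := by
        rw [harg2, hzl, hCB]
        exact (SVupd_iter (m+1) k Bc (Fin.last m) v).symm
      simp only [Dop]
      rw [harg1, harg3, harg2, smul_sub, smul_sub]
      rfl
    have h0 := hDzero z
    rw [funext keyeq] at h0
    have hlim := ((ha A).sub (ha Bc)).sub (ha Cc)
    have hzero : a A - a Bc - a Cc = 0 := tendsto_nhds_unique hlim h0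
    rwa [sub_sub, sub_eq_zero] at hzero
  have hadd : ∀ (x : Fin (m + 1) → S) (i : Fin (m + 1)) (u v : S),
      a (Function.update x i (u + v))
        = a (Function.update x i u) + a (Function.update x i v) := by
    intro x i u v
    have hswap : ∀ w : S, Function.update x i w
        = (Function.update (x ∘ (Equiv.swap i (Fin.last m))) (Fin.last m) w)
            ∘ (Equiv.swap i (Fin.last m)) := by
      intro w
      funext j
      simp only [Function.comp_apply, Function.update_apply]
      rcases eq_or_ne j i with rfl | hj
      · rw [if_pos rfl, Equiv.swap_apply_left, if_pos rfl]
      · rw [if_neg hj]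
        have h1 : (Equiv.swap i (Fin.last m)) j ≠ Fin.last m := by
          intro h
          apply hj
          have h2 := congrArg (Equiv.swap i (Fin.last m)) h
          rwa [Equiv.swap_apply_self, Equiv.swap_apply_right] at h2
        rw [if_neg h1]
        show x j = x ((Equiv.swap i (Fin.last m)) ((Equiv.swap i (Fin.last m)) j))
        rw [Equiv.swap_apply_self]
    rw [hswap (u+v), hswap u, hswap v, hasym _ (Equiv.swap i (Fin.last m)),
      hasym _ (Equiv.swap i (Fin.last m)), hasym _ (Equiv.swap i (Fin.last m))]
    exact haddlast (x ∘ (Equiv.swap i (Fin.last m))) u v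
  refine ⟨a, fun y => ha y, hasym, hadd, hbound, ?_⟩
  intro a' ha'sym ha'add ha'bound
  have ha'dbl : ∀ y : Fin (m+1) → S,
      a' (fun i => y i + y i) = (2:ℝ)^(m+1) • a' y := by
    intro y
    have main : ∀ j : ℕ, j ≤ m + 1 →
        a' (fun i : Fin (m+1) => if (i:ℕ) < j then y i + y i else y i)
          = (2:ℝ)^j • a' y := by
      intro j
      induction j with
      | zero =>
        intro _
        have h : (fun i : Fin (m+1) => if (i:ℕ) < 0 then y i + y i else y i) = y := by
          funext i
          exact if_neg (Nat.not_lt_zero _)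
        rw [h, pow_zero, one_smul]
      | succ j ih =>
        intro hj
        have h1 : (fun i : Fin (m+1) => if (i:ℕ) < j + 1 then y i + y i else y i)
            = Function.update (fun i : Fin (m+1) => if (i:ℕ) < j then y i + y i else y i)
                ⟨j, by omega⟩ (y ⟨j, by omega⟩ + y ⟨j, by omega⟩) := by
          funext i
          rw [Function.update_apply]
          rcases eq_or_ne i ⟨j, by omega⟩ with rfl | hij
          · rw [if_pos rfl, if_pos (Nat.lt_succ_self j)]
          · have hv : (i:ℕ) ≠ j := fun h => hij (Fin.ext h)
            rw [if_neg hij]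
            by_cases hc : (i:ℕ) < j
            · rw [if_pos (by omega), if_pos hc]
            · rw [if_neg (by omega), if_neg hc]
        have h2 : (fun i : Fin (m+1) => if (i:ℕ) < j then y i + y i else y i)
            = Function.update (fun i : Fin (m+1) => if (i:ℕ) < j then y i + y i else y i)
                ⟨j, by omega⟩ (y ⟨j, by omega⟩) := by
          rw [show y (⟨j, by omega⟩ : Fin (m+1))
              = (fun i : Fin (m+1) => if (i:ℕ) < j then y i + y i else y i) ⟨j, by omega⟩
            from (if_neg (lt_irrefl j)).symm]
          exact (Function.update_eq_self _ _).symm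
        rw [h1, ha'add _ ⟨j, by omega⟩ (y ⟨j, by omega⟩) (y ⟨j, by omega⟩), ← h2,
          ih (by omega), pow_succ, mul_smul, two_smul, smul_add]
    have h := main (m+1) le_rfl
    rwa [show (fun i : Fin (m+1) => if (i:ℕ) < m+1 then y i + y i else y i)
        = fun i => y i + y i from funext fun i => if_pos i.isLt] at h
  have ha'iter : ∀ (k : ℕ) (y : Fin (m+1) → S),
      a' (fun i => (fun s : S => s + s)^[k] (y i)) = (2:ℝ)^((m+1)*k) • a' y := by
    intro k
    induction k with
    | zero =>
      intro y
      simp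
    | succ k ih =>
      intro y
      have h1 : (fun i : Fin (m+1) => (fun s : S => s + s)^[k+1] (y i))
          = fun i => (fun s : S => s + s)^[k] (y i) + (fun s : S => s + s)^[k] (y i) := by
        funext i
        rw [Function.iterate_succ_apply']
      rw [h1, ha'dbl (fun i => (fun s : S => s + s)^[k] (y i)), ih y, smul_smul, ← pow_add]
      congr 1
      try ring
  have hconv' : ∀ y, Filter.Tendsto (fun k => SVgk m g k y) Filter.atTop (nhds (a' y)) := by
    intro y
    rw [← tendsto_sub_nhds_zero_iff]
    apply squeeze_zero_norm
      (a := fun k => Φ (fun i => (fun s : S => s + s)^[k] (y i)) / 2^((m+1)*k))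
    · intro k
      have hne : ((2:ℝ)^((m+1)*k)) ≠ 0 := by positivity
      have hsub : SVgk m g k y - a' y
          = ((2:ℝ)^((m+1)*k))⁻¹ • (g (fun i => (fun s : S => s + s)^[k] (y i))
              - a' (fun i => (fun s : S => s + s)^[k] (y i))) := by
        rw [smul_sub]
        congr 1
        rw [ha'iter k y, smul_smul, inv_mul_cancel₀ hne, one_smul]
      rw [hsub, norm_smul, norm_inv, norm_pow, Real.norm_two, div_eq_inv_mul]
      exact mul_le_mul_of_nonneg_left (ha'bound _) (by positivity)
    · exact hΦlim y
  funext y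
  exact tendsto_nhds_unique (hconv' y) (ha y)
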